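/- Let Δ act simply transitively on S, χ a character of Δ, and consider the O-bilinear pairing on M = ⊕_{v∈S}O·v given by (Σa_v v, Σb_v v) ↦ Σ_v a_v b_v. Then for x ∈ e_χM and y ∈ e_{χ^{-1}}M, the pairing value equals |Δ|·ξ_χ(x)·ξ_{χ^{-1}}(y), where ξ_χ, ξ_{χ^{-1}} are the v_0-coordinate projections; in particular the product ξ_χ(x)·ξ_{χ^{-1}}(y) is independent of the choice of base point v_0 ∈ S. -/

import Mathlib

/-! The product `x * y` of a `χ`-eigenvector and a `χ⁻¹`-eigenvector is `Δ`-invariant, because the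
two characters cancel; a simply transitive action makes it constant on `S`, and `|S| = |Δ|`. -/

theorem mul_smul_eq_mul_of_eigen {O Δ S : Type*} [CommMonoid O] [Group Δ] [MulAction Δ S]
    (χ : Δ →* Oˣ) {x y : S → O}
    (hx : ∀ (δ : Δ) (s : S), x (δ⁻¹ • s) = (((χ δ)⁻¹ : Oˣ) : O) * x s)
    (hy : ∀ (δ : Δ) (s : S), y (δ⁻¹ • s) = ((χ δ : Oˣ) : O) * y s) (δ : Δ) (s : S) :
    x (δ • s) * y (δ • s) = x s * y s := by
  have hxδ := hx δ⁻¹ s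
  have hyδ := hy δ⁻¹ s
  rw [inv_inv] at hxδ hyδ
  rw [hxδ, hyδ, mul_mul_mul_comm, ← Units.val_mul, inv_mul_cancel, Units.val_one, one_mul]

/-- For `x` in the `χ`-component and `y` in the `χ⁻¹`-component of
`⊕_{v∈S} O·v` (`Δ` acting simply transitively on `S`), the coordinatewise pairing
`Σ_v x_v y_v` equals `|Δ|·ξ_χ(x)·ξ_{χ⁻¹}(y) = |Δ|·x(v₀)·y(v₀)`; in particular
`x(v₁)·y(v₁)` is independent of the base point `v₁ ∈ S`. -/
theorem stmt9 {O Δ S : Type*} [CommRing O] [CommGroup Δ] [Fintype Δ] [Fintype S]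
    [MulAction Δ S]
    (χ : Δ →* Oˣ) (v0 : S) (hfree : ∀ s : S, ∃! δ : Δ, δ • v0 = s)
    (x y : S → O)
    (hx : ∀ (δ : Δ) (s : S), x (δ⁻¹ • s) = (((χ δ)⁻¹ : Oˣ) : O) * x s)
    (hy : ∀ (δ : Δ) (s : S), y (δ⁻¹ • s) = ((χ δ : Oˣ) : O) * y s) :
    (∑ s : S, x s * y s) = (Fintype.card Δ : O) * (x v0 * y v0) ∧
      ∀ v1 : S, x v1 * y v1 = x v0 * y v0 := by
  have hconst : ∀ v1 : S, x v1 * y v1 = x v0 * y v0 := fun v1 => by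
    obtain ⟨δ, rfl, -⟩ := hfree v1
    exact mul_smul_eq_mul_of_eigen χ hx hy δ v0
  have hcard : Fintype.card Δ = Fintype.card S :=
    Fintype.card_of_bijective ((Function.bijective_iff_existsUnique _).2 hfree)
  refine ⟨?_, hconst⟩
  rw [Finset.sum_congr rfl fun s _ => hconst s, Finset.sum_const, Finset.card_univ, ← hcard,
    nsmul_eq_mul]
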